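/- arXiv:1411.3025 — 3 statements merged into one kernel-verified Lean document; each statement's English description precedes it below -/
import Mathlib

section
/- Let v, w in Z^2 be primitive and linearly independent, and let p = |det(v,w)|. If α, β are integers with α·v_1 + β·v_2 = 1, then q := p minus the remainder of (α·w_1 + β·w_2) modulo p satisfies: there exists A in GL_2(Z) with A·v = (1,0) and A·w = (-q, p) (interpreting q = p as q = 0 when the remainder is 0). -/
/-!
The row `(α, β)` sends `v` to `1`, and the row `(-v₁, v₀)` sends `v` to `0` and `w` to
`d = det(v, w)`. Adding `k` times the second row to the first keeps `A v = (1, 0)` and shifts the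
first coordinate of `A w` by `k d`; since `q ≡ -(α w₀ + β w₁) (mod |d|)`, a suitable `k` makes it
`-q`. Multiplying the second row by the sign of `d` turns `d` into `p = |d|`.
-/

open Matrix

-- This includes `p = 0`, where `m % 0 = m`, so the sum is `0`.
theorem dvd_add_ite_emod (m p : ℤ) : p ∣ m + if m % p = 0 then 0 else p - m % p := by
  split_ifs with h
  · simpa using Int.dvd_of_emod_eq_zero h
  · exact ⟨1 + m / p, by rw [Int.emod_def]; ring⟩

def adaptedMatrix (v : Fin 2 → ℤ) (α β k s : ℤ) : Matrix (Fin 2) (Fin 2) ℤ :=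
  !![α - k * v 1, β + k * v 0; -(s * v 1), s * v 0]

section adaptedMatrix

variable (v : Fin 2 → ℤ) {α β : ℤ} (k s : ℤ)

theorem adaptedMatrix_det (hαβ : α * v 0 + β * v 1 = 1) : (adaptedMatrix v α β k s).det = s := by
  rw [adaptedMatrix, det_fin_two_of]
  linear_combination s * hαβ

theorem adaptedMatrix_mulVec (w : Fin 2 → ℤ) :
    adaptedMatrix v α β k s *ᵥ w =
      ![α * w 0 + β * w 1 + k * (v 0 * w 1 - v 1 * w 0), s * (v 0 * w 1 - v 1 * w 0)] := by
  ext i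
  fin_cases i <;> simp [adaptedMatrix, mulVec, dotProduct, Fin.sum_univ_two] <;> ring

theorem adaptedMatrix_mulVec_self (hαβ : α * v 0 + β * v 1 = 1) :
    adaptedMatrix v α β k s *ᵥ v = ![1, 0] := by
  rw [adaptedMatrix_mulVec, hαβ, mul_comm (v 0) (v 1), sub_self, mul_zero, mul_zero, add_zero]

end adaptedMatrix

theorem stmt_1_general (v w : Fin 2 → ℤ)
    (α β : ℤ) (hαβ : α * v 0 + β * v 1 = 1)
    (p : ℤ) (hp : p = |v 0 * w 1 - v 1 * w 0|)
    (q : ℤ)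
    (hq : q = if (α * w 0 + β * w 1) % p = 0 then 0 else p - (α * w 0 + β * w 1) % p) :
    ∃ A : Matrix (Fin 2) (Fin 2) ℤ, (A.det = 1 ∨ A.det = -1) ∧
      A.mulVec v = ![1, 0] ∧ A.mulVec w = ![-q, p] := by
  set d := v 0 * w 1 - v 1 * w 0
  obtain ⟨s, hs, hsd⟩ : ∃ s : ℤ, (s = 1 ∨ s = -1) ∧ p = s * d := by
    rcases abs_choice d with h | h
    · exact ⟨1, .inl rfl, by rw [hp, h, one_mul]⟩
    · exact ⟨-1, .inr rfl, by rw [hp, h, neg_one_mul]⟩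
  obtain ⟨c, hc⟩ : d ∣ α * w 0 + β * w 1 + q := by
    rw [← abs_dvd, ← hp, hq]
    exact dvd_add_ite_emod _ _
  refine ⟨adaptedMatrix v α β (-c) s, ?_, adaptedMatrix_mulVec_self v _ _ hαβ, ?_⟩
  · rwa [adaptedMatrix_det v _ _ hαβ]
  · rw [adaptedMatrix_mulVec, hsd]
    congr 2
    linear_combination hc

/-- Let `v, w ∈ ℤ²` be primitive and linearly independent, `p = |det(v,w)|`.
If `α·v₀ + β·v₁ = 1`, then `q := p - ((α·w₀ + β·w₁) mod p)` (interpreted as `0` when the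
remainder is `0`) satisfies: there is `A ∈ GL₂(ℤ)` with `A·v = (1,0)` and `A·w = (-q,p)`. -/
theorem stmt_1 (v w : Fin 2 → ℤ)
    (hv : IsCoprime (v 0) (v 1)) (hw : IsCoprime (w 0) (w 1))
    (α β : ℤ) (hαβ : α * v 0 + β * v 1 = 1)
    (p : ℤ) (hp : p = |v 0 * w 1 - v 1 * w 0|) (hp0 : p ≠ 0)
    (q : ℤ)
    (hq : q = if (α * w 0 + β * w 1) % p = 0 then 0 else p - (α * w 0 + β * w 1) % p) :
    ∃ A : Matrix (Fin 2) (Fin 2) ℤ, (A.det = 1 ∨ A.det = -1) ∧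
      A.mulVec v = ![1, 0] ∧ A.mulVec w = ![-q, p] :=
  stmt_1_general v w α β hαβ p hp q hq
end

section
/- Let p > q ≥ 1 be coprime integers, γ_b = ⌈p/q⌉, and let γ_c ≥ 2 and λ ≥ 1 be integers satisfying γ_c·q ≥ p·(λ·γ_c − 2). Then γ_c > (γ_b − 1)(γ_c − 2). -/
/-- Let `p > q ≥ 1` be coprime, `γ_b = ⌈p/q⌉`, and `γ_c ≥ 2`, `λ ≥ 1` integers with
`γ_c·q ≥ p·(λ·γ_c − 2)`. Then `γ_c > (γ_b − 1)(γ_c − 2)`. -/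
theorem stmt_3 (p q : ℤ) (hq : 1 ≤ q) (hpq : q < p) (hcop : IsCoprime p q)
    (γb : ℤ) (hγb : γb = ⌈(p : ℚ) / (q : ℚ)⌉)
    (γc lam : ℤ) (hγc : 2 ≤ γc) (hlam : 1 ≤ lam)
    (hineq : γc * q ≥ p * (lam * γc - 2)) :
    γc > (γb - 1) * (γc - 2) := by
  have hq0 : (0:ℚ) < (q:ℚ) := by exact_mod_cast lt_of_lt_of_le one_pos hq
  have hceil : ((γb:ℚ)) < (p:ℚ)/(q:ℚ) + 1 := by
    rw [hγb]; push_cast; exact Int.ceil_lt_add_one _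
  have h1 : ((γb:ℚ) - 1) * q < p := by
    have := (mul_lt_mul_of_pos_right (by linarith : (γb:ℚ) - 1 < (p:ℚ)/(q:ℚ)) hq0)
    rwa [div_mul_cancel₀ _ (ne_of_gt hq0)] at this
  have h1' : (γb - 1) * q < p := by exact_mod_cast h1
  have hp0 : (0:ℤ) < p := by linarith
  -- p*(γc-2) ≤ γc*q
  have h2 : p * (γc - 2) ≤ γc * q := by
    nlinarith [mul_nonneg (mul_nonneg hp0.le (by linarith : (0:ℤ) ≤ lam - 1))
      (by linarith : (0:ℤ) ≤ γc)]
  -- hence ((γb-1)*q + 1)*(γc-2) ≤ γc*q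
  have h3 : ((γb - 1) * q + 1) * (γc - 2) ≤ γc * q := by
    nlinarith [mul_nonneg (by linarith : (0:ℤ) ≤ p - ((γb - 1) * q + 1))
      (by linarith : (0:ℤ) ≤ γc - 2)]
  -- so q * (γc - (γb-1)*(γc-2)) ≥ γc - 2
  have h4 : γc - 2 ≤ q * (γc - (γb - 1) * (γc - 2)) := by nlinarith [h3]
  by_contra h
  push_neg at h
  have hA : γc - (γb - 1) * (γc - 2) ≤ 0 := by linarith
  have h5 : q * (γc - (γb - 1) * (γc - 2)) ≤ 0 :=
    mul_nonpos_of_nonneg_of_nonpos (by linarith) hA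
  have heq : γc - 2 = 0 := le_antisymm (by linarith) (by linarith)
  have : (γb - 1) * (γc - 2) = 0 := by rw [heq, mul_zero]
  linarith
end

section
/- Let K be a field. The kernel of the K-algebra map K[x_{00}, x_{10}, x_{01}, x_{11}] → K[s,t,u] sending x_{00} ↦ u, x_{10} ↦ su, x_{01} ↦ tu, x_{11} ↦ stu is the principal ideal generated by x_{00}x_{11} − x_{10}x_{01}. -/
/-!
Monomials go to monomials: `x^m ↦ s^(m₁₀ + m₁₁) t^(m₀₁ + m₁₁) u^|m|`. From the image exponent
one reads off the exponent `m - k (e₀₀ + e₁₁) + k (e₁₀ + e₀₁)`, `k = min m₀₀ m₁₁`; this gives a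
linear map `ρ` back with `x^m ≡ ρ (φ x^m)` modulo `q = x₀₀x₁₁ - x₁₀x₀₁`, since `a - b` divides
`a^k - b^k`. Hence `f ≡ ρ (φ f) mod q` for every `f`, and the kernel of `φ` lies in `(q)`.
-/

open MvPolynomial

theorem MvPolynomial.aeval_monomial_monomial {σ τ R : Type*} [CommSemiring R]
    (a : σ → τ →₀ ℕ) (m : σ →₀ ℕ) (c : R) :
    aeval (fun i => monomial (a i) (1 : R)) (monomial m c) =
      monomial (Finsupp.linearCombination ℕ a m) c := by
  rw [aeval_monomial, Finsupp.linearCombination_apply, monomial_finsupp_sum_index,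
    algebraMap_eq]
  simp only [monomial_pow, one_pow]

theorem MvPolynomial.monomial_one_fin_four {R : Type*} [CommSemiring R] (m : Fin 4 →₀ ℕ) :
    monomial m (1 : R) = X 0 ^ m 0 * X 1 ^ m 1 * X 2 ^ m 2 * X 3 ^ m 3 := by
  rw [monomial_eq, Finsupp.prod_fintype _ _ fun _ => pow_zero _, Fin.prod_univ_four, C_1,
    one_mul]

noncomputable section

namespace UnitSquare

/-- The vertices `(a, b)` of the square lifted to `(a, b, 1)`, in the order `x₀₀, x₁₀, x₀₁, x₁₁`. -/
def exponent : Fin 4 → Fin 3 →₀ ℕ :=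
  ![.single 2 1, .single 0 1 + .single 2 1, .single 1 1 + .single 2 1,
    .single 0 1 + .single 1 1 + .single 2 1]

theorem vec_eq_monomial_exponent {R : Type*} [CommSemiring R] :
    (![X 2, X 0 * X 2, X 1 * X 2, X 0 * X 1 * X 2] : Fin 4 → MvPolynomial (Fin 3) R) =
      fun i => monomial (exponent i) 1 := by
  funext i
  fin_cases i <;> simp [exponent, X, monomial_mul]

theorem linearCombination_exponent_apply (m : Fin 4 →₀ ℕ) :
    Finsupp.linearCombination ℕ exponent m 0 = m 1 + m 3 ∧
      Finsupp.linearCombination ℕ exponent m 1 = m 2 + m 3 ∧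
      Finsupp.linearCombination ℕ exponent m 2 = m 0 + m 1 + m 2 + m 3 := by
  simp [Finsupp.linearCombination_apply, Finsupp.sum_fintype, Fin.sum_univ_four, exponent]

/-- The exponent in the fibre of `Finsupp.linearCombination ℕ exponent` over `n` with `m₀₀ = 0`
(if `n 2 < n 0 + n 1`) or `m₁₁ = 0` (otherwise); truncated subtraction covers both cases. -/
def normalForm (n : Fin 3 →₀ ℕ) : Fin 4 →₀ ℕ :=
  Finsupp.equivFunOnFinite.symm
    ![n 2 - (n 0 + n 1), n 0 - (n 0 + n 1 - n 2), n 1 - (n 0 + n 1 - n 2), n 0 + n 1 - n 2]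

variable {R : Type*} [CommRing R]

theorem dvd_monomial_sub_normalForm (m : Fin 4 →₀ ℕ) :
    (X 0 * X 3 - X 1 * X 2 : MvPolynomial (Fin 4) R) ∣
      monomial m 1 - monomial (normalForm (Finsupp.linearCombination ℕ exponent m)) 1 := by
  obtain ⟨h0, h1, h2⟩ := linearCombination_exponent_apply m
  set k := min (m 0) (m 3)
  obtain ⟨p, hp⟩ : ∃ p, m 0 = p + k := ⟨m 0 - k, by omega⟩
  obtain ⟨r, hr⟩ : ∃ r, m 3 = r + k := ⟨m 3 - k, by omega⟩
  have hn : normalForm (Finsupp.linearCombination ℕ exponent m) =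
      Finsupp.equivFunOnFinite.symm ![p, m 1 + k, m 2 + k, r] := by
    rw [normalForm, h0, h1, h2]
    congr <;> omega
  have hsplit : (monomial m 1 - monomial (Finsupp.equivFunOnFinite.symm ![p, m 1 + k, m 2 + k, r]) 1
      : MvPolynomial (Fin 4) R) =
      X 0 ^ p * X 1 ^ m 1 * X 2 ^ m 2 * X 3 ^ r * ((X 0 * X 3) ^ k - (X 1 * X 2) ^ k) := by
    rw [monomial_one_fin_four, monomial_one_fin_four, hp, hr]
    simp only [Finsupp.equivFunOnFinite_symm_apply_apply, Matrix.cons_val_zero,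
      Matrix.cons_val_one, Matrix.cons_val]
    ring
  rw [hn, hsplit]
  exact dvd_mul_of_dvd_right (sub_dvd_pow_sub_pow _ _ k) _

variable (R) in
def retraction : MvPolynomial (Fin 3) R →ₗ[R] MvPolynomial (Fin 4) R :=
  AddMonoidAlgebra.mapDomainLinearMap R R normalForm

theorem retraction_monomial (n : Fin 3 →₀ ℕ) (c : R) :
    retraction R (monomial n c) = monomial (normalForm n) c :=
  AddMonoidAlgebra.mapDomainLinearMap_single _ _ _

theorem sub_retraction_aeval_mem_span (f : MvPolynomial (Fin 4) R) :
    f - retraction R (aeval (fun i => monomial (exponent i) 1) f) ∈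
      Ideal.span {X 0 * X 3 - X 1 * X 2} := by
  induction f using MvPolynomial.induction_on' with
  | monomial m c =>
    rw [aeval_monomial_monomial, retraction_monomial, Ideal.mem_span_singleton]
    simpa [mul_sub, C_mul_monomial] using (dvd_monomial_sub_normalForm (R := R) m).mul_left (C c)
  | add f g hf hg =>
    rw [map_add, map_add, add_sub_add_comm]
    exact add_mem hf hg

end UnitSquare

end

open UnitSquare in
/-- The toric ideal of the unit square: the kernel of the `K`-algebra map
`K[x₀₀,x₁₀,x₀₁,x₁₁] → K[s,t,u]`, `x₀₀ ↦ u`, `x₁₀ ↦ su`, `x₀₁ ↦ tu`, `x₁₁ ↦ stu`, is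
the principal ideal generated by `x₀₀x₁₁ − x₁₀x₀₁`. -/
theorem stmt_16 (K : Type*) [Field K] :
    RingHom.ker (MvPolynomial.aeval
        (![X 2, X 0 * X 2, X 1 * X 2, X 0 * X 1 * X 2] : Fin 4 → MvPolynomial (Fin 3) K) :
      MvPolynomial (Fin 4) K →ₐ[K] MvPolynomial (Fin 3) K).toRingHom =
    Ideal.span {(X 0 : MvPolynomial (Fin 4) K) * X 3 - X 1 * X 2} := by
  refine le_antisymm (fun f hf => ?_) ?_
  · rw [RingHom.mem_ker, AlgHom.toRingHom_eq_coe, RingHom.coe_coe, vec_eq_monomial_exponent] at hf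
    simpa only [hf, map_zero, sub_zero] using sub_retraction_aeval_mem_span f
  · rw [Ideal.span_singleton_le_iff_mem, RingHom.mem_ker]
    simp only [AlgHom.toRingHom_eq_coe, RingHom.coe_coe, map_sub, map_mul, aeval_X,
      Matrix.cons_val_zero, Matrix.cons_val_one, Matrix.cons_val]
    ring
end
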